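/- arXiv:2106.08903 — 2 statements merged into one kernel-verified Lean document; each statement's English description precedes it below -/
import Mathlib

section
/- Let d, n, k be natural numbers with n ≥ 1. Let h be a function taking a point configuration X : Fin n → EuclideanSpace ℝ (Fin d) together with per-point scalar features H : Fin n → (Fin k → ℝ) and returning an output h(X,H) : Fin n → EuclideanSpace ℝ (Fin d), such that h is: (i) permutation-equivariant, i.e. h(σ·X, σ·H) = σ·(h(X,H)) for every permutation σ of Fin n; (ii) rotation-equivariant, i.e. h(R·X, H) = R·(h(X,H)) for every R ∈ SO(d); and (iii) translation-invariant, i.e. h(X + t, H) = h(X,H) for every t ∈ EuclideanSpace ℝ (Fin d). Then there exist functions f⁽ᶜ⁾ : (Fin n → EuclideanSpace ℝ (Fin d)) × (Fin n → (Fin k → ℝ)) → (Fin n → ℝ), indexed by c ∈ Fin n, each of which is translation-invariant, rotation-invariant, and permutation-equivariant in the sense that f⁽σ c⁾(σ·X, σ·H)_{σ a} = f⁽ᶜ⁾(X,H)_a for all σ, a, c, such that: for every input (X, H) with the property that for every a ∈ Fin n the family of relative vectors {X_c − X_a : c ∈ Fin n} does not span a subspace of dimension exactly d − 1, and for every a ∈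 Fin n, one has h(X,H)_a = Σ_{c ∈ Fin n, c ≠ a} f⁽ᶜ⁾(X,H)_a • (X_c − X_a). -/
open scoped RealInnerProductSpace

/-- `R` is a special orthogonal transformation: a linear isometry (orthogonal map)
of determinant 1. -/
def IsSpecialOrthogonal {d : ℕ}
    (R : EuclideanSpace ℝ (Fin d) ≃ₗᵢ[ℝ] EuclideanSpace ℝ (Fin d)) : Prop :=
  LinearMap.det (R.toLinearEquiv : EuclideanSpace ℝ (Fin d) →ₗ[ℝ] EuclideanSpace ℝ (Fin d)) = 1

/-!
Fix `a` and let `V` be the span of the relative vectors `X c - X a`. A rotation fixing `V` pointwise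
moves the configuration `X` by a translation, so it fixes `h X H a`. If `V` has codimension at
least two, every `u ∈ Vᗮ` is reversed by such a rotation (the product of the reflections in `u` and
in some `u' ∈ Vᗮ` orthogonal to `u`), hence `h X H a ⊥ Vᗮ`, i.e. `h X H a ∈ V`.

The coefficients are chosen canonically as the minimum-norm solution `g` of
`∑ c, g c • (X c - X a) = h X H a`. This choice commutes with linear isometries of the coefficient
space and with injective linear maps of the target, which gives both the rotation invariance and the
permutation equivariance.
-/

open Module LinearMap Submodule

section MinNormPreimage

variable {𝕜 E E' F F' : Type*} [RCLike 𝕜]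
  [NormedAddCommGroup E] [InnerProductSpace 𝕜 E] [FiniteDimensional 𝕜 E]
  [NormedAddCommGroup E'] [InnerProductSpace 𝕜 E'] [FiniteDimensional 𝕜 E']
  [AddCommGroup F] [Module 𝕜 F] [AddCommGroup F'] [Module 𝕜 F']

/-- The preimage of `w` lying in `(ker T)ᗮ`, i.e. the minimum-norm preimage;
`0` if `w ∉ range T`. -/
noncomputable def minNormPreimage (T : E →ₗ[𝕜] F) (w : F) : E :=
  open Classical in
  if hw : w ∈ range T then (ker T)ᗮ.starProjection (mem_range.mp hw).choose else 0

theorem minNormPreimage_mem_orthogonal_ker (T : E →ₗ[𝕜] F) (w : F) :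
    minNormPreimage T w ∈ (ker T)ᗮ := by
  unfold minNormPreimage
  split_ifs
  · exact starProjection_apply_mem _ _
  · exact zero_mem _

theorem apply_minNormPreimage {T : E →ₗ[𝕜] F} {w : F} (hw : w ∈ range T) :
    T (minNormPreimage T w) = w := by
  have hy := (mem_range.mp hw).choose_spec
  set y := (mem_range.mp hw).choose
  have hker : y - (ker T)ᗮ.starProjection y ∈ ker T := by
    simpa only [orthogonal_orthogonal] using (ker T)ᗮ.sub_starProjection_mem_orthogonal y
  rw [minNormPreimage, dif_pos hw]
  rwa [mem_ker, map_sub, sub_eq_zero, hy, eq_comm] at hker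

theorem minNormPreimage_eq {T : E →ₗ[𝕜] F} {g : E} (hg : g ∈ (ker T)ᗮ) :
    minNormPreimage T (T g) = g := by
  have hsub : minNormPreimage T (T g) - g ∈ ker T ⊓ (ker T)ᗮ :=
    mem_inf.mpr ⟨by rw [mem_ker, map_sub, apply_minNormPreimage (mem_range_self T g), sub_self],
      sub_mem (minNormPreimage_mem_orthogonal_ker T _) hg⟩
  rwa [inf_orthogonal_eq_bot, mem_bot, sub_eq_zero] at hsub

theorem minNormPreimage_of_notMem {T : E →ₗ[𝕜] F} {w : F} (hw : w ∉ range T) :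
    minNormPreimage T w = 0 :=
  dif_neg hw

theorem minNormPreimage_naturality {T : E →ₗ[𝕜] F} {T' : E' →ₗ[𝕜] F'} (P : E ≃ₗᵢ[𝕜] E')
    {Q : F →ₗ[𝕜] F'} (hQ : Function.Injective Q)
    (hT : T' ∘ₗ P.toLinearEquiv.toLinearMap = Q ∘ₗ T) (w : F) :
    minNormPreimage T' (Q w) = P (minNormPreimage T w) := by
  have hT' (x : E) : T' (P x) = Q (T x) := LinearMap.congr_fun hT x
  by_cases hw : w ∈ range T
  · have hker : ker T' = (ker T).map P.toLinearEquiv.toLinearMap := by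
      ext x
      rw [mem_ker, ← P.apply_symm_apply x, hT', map_eq_zero_iff Q hQ, mem_map_equiv]
      simp
    have hmem : P (minNormPreimage T w) ∈ (ker T')ᗮ := by
      rw [hker, ← map_orthogonal_equiv]
      exact mem_map_of_mem (minNormPreimage_mem_orthogonal_ker T w)
    rw [← minNormPreimage_eq hmem, hT', apply_minNormPreimage hw]
  · have hQw : Q w ∉ range T' := by
      rintro ⟨x, hx⟩
      rw [← P.apply_symm_apply x, hT'] at hx
      exact hw ⟨_, hQ hx⟩
    rw [minNormPreimage_of_notMem hw, minNormPreimage_of_notMem hQw, map_zero]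

end MinNormPreimage

section MinNormCoeffs

variable (𝕜 : Type*) {ι F F' : Type*} [RCLike 𝕜] [Fintype ι]
  [AddCommGroup F] [Module 𝕜 F] [AddCommGroup F'] [Module 𝕜 F']

noncomputable def euclideanLinearCombination (v : ι → F) : EuclideanSpace 𝕜 ι →ₗ[𝕜] F :=
  Fintype.linearCombination 𝕜 v ∘ₗ (WithLp.linearEquiv 2 𝕜 (ι → 𝕜)).toLinearMap

theorem euclideanLinearCombination_apply (v : ι → F) (g : EuclideanSpace 𝕜 ι) :
    euclideanLinearCombination 𝕜 v g = ∑ c, g c • v c :=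
  rfl

theorem range_euclideanLinearCombination (v : ι → F) :
    range (euclideanLinearCombination 𝕜 v) = span 𝕜 (Set.range v) := by
  rw [euclideanLinearCombination, range_comp, LinearEquiv.range, Submodule.map_top,
    Fintype.range_linearCombination]

noncomputable def minNormCoeffs (v : ι → F) (w : F) : EuclideanSpace 𝕜 ι :=
  minNormPreimage (euclideanLinearCombination 𝕜 v) w

variable {𝕜}

theorem sum_minNormCoeffs_smul {v : ι → F} {w : F} (hw : w ∈ span 𝕜 (Set.range v)) :
    ∑ c, minNormCoeffs 𝕜 v w c • v c = w :=
  apply_minNormPreimage (T := euclideanLinearCombination 𝕜 v)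
    (by rwa [range_euclideanLinearCombination])

theorem minNormCoeffs_map (v : ι → F) (w : F) {Q : F →ₗ[𝕜] F'} (hQ : Function.Injective Q) :
    minNormCoeffs 𝕜 (fun c => Q (v c)) (Q w) = minNormCoeffs 𝕜 v w :=
  minNormPreimage_naturality (LinearIsometryEquiv.refl 𝕜 _) hQ
    (LinearMap.ext fun g => by simp [euclideanLinearCombination_apply]) w

theorem minNormCoeffs_perm (σ : Equiv.Perm ι) (v : ι → F) (w : F) (c : ι) :
    minNormCoeffs 𝕜 (fun b => v (σ⁻¹ b)) w (σ c) = minNormCoeffs 𝕜 v w c := by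
  have hcomb : euclideanLinearCombination 𝕜 (fun b => v (σ⁻¹ b)) ∘ₗ
      (LinearIsometryEquiv.piLpCongrLeft 2 𝕜 𝕜 σ).toLinearEquiv.toLinearMap =
      LinearMap.id ∘ₗ euclideanLinearCombination 𝕜 v := by
    ext g
    simp only [Equiv.Perm.coe_inv, coe_comp, LinearEquiv.coe_coe,
      LinearIsometryEquiv.coe_toLinearEquiv, Function.comp_apply, euclideanLinearCombination_apply,
      LinearIsometryEquiv.piLpCongrLeft_apply, Equiv.piCongrLeft'_apply, id_comp]
    exact Equiv.sum_comp σ.symm (fun c => g c • v c)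
  have h := congrArg (· (σ c)) (minNormPreimage_naturality _ Function.injective_id hcomb w)
  simpa [minNormCoeffs, LinearIsometryEquiv.piLpCongrLeft_apply] using h

end MinNormCoeffs

section Rotations

variable {E : Type*} [NormedAddCommGroup E] [InnerProductSpace ℝ E] [FiniteDimensional ℝ E]

theorem exists_det_eq_one_map_eq_neg_of_two_le_finrank_orthogonal {V : Submodule ℝ E}
    (hV : 2 ≤ finrank ℝ Vᗮ) {u : E} (hu : u ∈ Vᗮ) (hu0 : u ≠ 0) :
    ∃ R : E ≃ₗᵢ[ℝ] E, LinearMap.det (R.toLinearEquiv : E →ₗ[ℝ] E) = 1 ∧ R u = -u ∧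
      ∀ x ∈ V, R x = x := by
  obtain ⟨u', hu', hu'0⟩ : ∃ u' ∈ (V ⊔ ℝ ∙ u)ᗮ, u' ≠ 0 := by
    refine exists_mem_ne_zero_of_ne_bot fun hbot => ?_
    have hsup := Submodule.finrank_add_le_finrank_add_finrank V (ℝ ∙ u)
    rw [orthogonal_eq_bot_iff.mp hbot, finrank_top, finrank_span_singleton hu0] at hsup
    have := finrank_add_finrank_orthogonal V
    omega
  rw [← inf_orthogonal, mem_inf, mem_orthogonal_singleton_iff_inner_right] at hu'
  let R := (ℝ ∙ u)ᗮ.reflection.trans (ℝ ∙ u')ᗮ.reflection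
  refine ⟨R, ?_, ?_, fun x hx => ?_⟩
  · rw [← LinearEquiv.coe_det]
    simp only [R, LinearIsometryEquiv.toLinearEquiv_trans, LinearEquiv.det_trans,
      linearEquiv_det_reflection]
    rw [orthogonal_orthogonal, orthogonal_orthogonal, finrank_span_singleton hu0,
      finrank_span_singleton hu'0]
    norm_num
  · have hu_perp : u ∈ (ℝ ∙ u')ᗮ := mem_orthogonal_singleton_iff_inner_left.mpr hu'.2
    simp [R, reflection_orthogonalComplement_singleton_eq_neg,
      reflection_mem_subspace_eq_self hu_perp]
  · have hxu : x ∈ (ℝ ∙ u)ᗮ := mem_orthogonal_singleton_iff_inner_left.mpr (hu x hx)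
    have hxu' : x ∈ (ℝ ∙ u')ᗮ := mem_orthogonal_singleton_iff_inner_left.mpr (hu'.1 x hx)
    simp [R, reflection_mem_subspace_eq_self hxu, reflection_mem_subspace_eq_self hxu']

theorem mem_of_forall_det_eq_one_map_eq_self {V : Submodule ℝ E}
    (hV : finrank ℝ V ≠ finrank ℝ E - 1) {w : E}
    (hw : ∀ R : E ≃ₗᵢ[ℝ] E, LinearMap.det (R.toLinearEquiv : E →ₗ[ℝ] E) = 1 →
      (∀ x ∈ V, R x = x) → R w = w) :
    w ∈ V := by
  have hsum := finrank_add_finrank_orthogonal V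
  rcases Nat.lt_or_ge (finrank ℝ Vᗮ) 2 with hlt | hge
  · have hVperp : finrank ℝ Vᗮ = 0 := by omega
    rw [Submodule.finrank_eq_zero, orthogonal_eq_bot_iff] at hVperp
    exact hVperp ▸ mem_top
  rw [← orthogonal_orthogonal V]
  intro u hu
  rcases eq_or_ne u 0 with rfl | hu0
  · exact inner_zero_left w
  obtain ⟨R, hdet, hRu, hRV⟩ := exists_det_eq_one_map_eq_neg_of_two_le_finrank_orthogonal hge hu hu0
  have := R.inner_map_map u w
  rw [hRu, hw R hdet hRV, inner_neg_left] at this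
  linarith

end Rotations

theorem map_eq_add_of_map_sub_eq {ι M G : Type*} [AddCommGroup M] [FunLike G M M]
    [AddMonoidHomClass G M M] {f : G} {X : ι → M} {a : ι} (hf : ∀ c, f (X c - X a) = X c - X a) :
    (fun c => f (X c)) = fun c => X c + (f (X a) - X a) := by
  funext c
  have hc := hf c
  rw [map_sub, sub_eq_iff_eq_add] at hc
  rw [hc]
  abel

theorem univ_vec_general (d n k : ℕ)
    (h : (Fin n → EuclideanSpace ℝ (Fin d)) → (Fin n → (Fin k → ℝ)) →
      (Fin n → EuclideanSpace ℝ (Fin d)))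
    (hperm : ∀ (σ : Equiv.Perm (Fin n)) X H,
      h (fun a => X (σ⁻¹ a)) (fun a => H (σ⁻¹ a)) = fun a => h X H (σ⁻¹ a))
    (hrot : ∀ R : EuclideanSpace ℝ (Fin d) ≃ₗᵢ[ℝ] EuclideanSpace ℝ (Fin d),
      IsSpecialOrthogonal R → ∀ X H, h (fun a => R (X a)) H = fun a => R (h X H a))
    (htrans : ∀ (t : EuclideanSpace ℝ (Fin d)) X H,
      h (fun a => X a + t) H = h X H) :
    ∃ f : Fin n → (Fin n → EuclideanSpace ℝ (Fin d)) → (Fin n → (Fin k → ℝ)) →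
        (Fin n → ℝ),
      -- each f⁽ᶜ⁾ is translation-invariant
      (∀ c (t : EuclideanSpace ℝ (Fin d)) X H,
        f c (fun a => X a + t) H = f c X H) ∧
      -- each f⁽ᶜ⁾ is rotation-invariant
      (∀ c, ∀ R : EuclideanSpace ℝ (Fin d) ≃ₗᵢ[ℝ] EuclideanSpace ℝ (Fin d),
        IsSpecialOrthogonal R → ∀ X H, f c (fun a => R (X a)) H = f c X H) ∧
      -- the family is permutation-equivariant: f⁽σ c⁾(σ·X, σ·H)_{σ a} = f⁽ᶜ⁾(X,H)_a
      (∀ (σ : Equiv.Perm (Fin n)) (c a : Fin n) X H,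
        f (σ c) (fun b => X (σ⁻¹ b)) (fun b => H (σ⁻¹ b)) (σ a) = f c X H a) ∧
      -- the decomposition holds on non-degenerate configurations
      (∀ X H,
        (∀ a : Fin n,
          Module.finrank ℝ
            (Submodule.span ℝ (Set.range fun c => X c - X a)) ≠ d - 1) →
        ∀ a : Fin n,
          h X H a = ∑ c ∈ Finset.univ.erase a, f c X H a • (X c - X a)) := by
  refine ⟨fun c X H a => minNormCoeffs ℝ (fun b => X b - X a) (h X H a) c, ?_, ?_, ?_, ?_⟩
  · intro c t X H
    simp only [htrans, add_sub_add_right_eq_sub]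
  · intro c R hR X H
    funext a
    simp only [hrot R hR, ← map_sub]
    exact congr($(minNormCoeffs_map _ _ (Q := R.toLinearEquiv.toLinearMap) R.injective) c)
  · intro σ c a X H
    simp only [hperm]
    simp only [Equiv.Perm.inv_def, Equiv.symm_apply_apply]
    exact minNormCoeffs_perm σ (fun b => X b - X a) (h X H a) c
  · intro X H hX a
    have hfixed : ∀ R : EuclideanSpace ℝ (Fin d) ≃ₗᵢ[ℝ] EuclideanSpace ℝ (Fin d),
        IsSpecialOrthogonal R → (∀ x ∈ span ℝ (Set.range fun c => X c - X a), R x = x) →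
        R (h X H a) = h X H a := by
      intro R hR hRX
      rw [← congrFun (hrot R hR X H) a,
        map_eq_add_of_map_sub_eq fun c => hRX _ (subset_span ⟨c, rfl⟩), htrans]
    have hmem := mem_of_forall_det_eq_one_map_eq_self
      (by rw [finrank_euclideanSpace_fin]; exact hX a) hfixed
    rw [Finset.sum_erase _ (by simp), sum_minNormCoeffs_smul hmem]

/-- Theorem C (th:univ_vec): any translation-invariant, rotation- and
permutation-equivariant vector-valued function of a point cloud (with scalar features)
is, away from configurations whose relative vectors span a `(d-1)`-dimensional space,
a linear combination of the relative position vectors with invariant scalar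
coefficient functions. -/
theorem univ_vec (d n k : ℕ) (hn : 1 ≤ n)
    (h : (Fin n → EuclideanSpace ℝ (Fin d)) → (Fin n → (Fin k → ℝ)) →
      (Fin n → EuclideanSpace ℝ (Fin d)))
    (hperm : ∀ (σ : Equiv.Perm (Fin n)) X H,
      h (fun a => X (σ⁻¹ a)) (fun a => H (σ⁻¹ a)) = fun a => h X H (σ⁻¹ a))
    (hrot : ∀ R : EuclideanSpace ℝ (Fin d) ≃ₗᵢ[ℝ] EuclideanSpace ℝ (Fin d),
      IsSpecialOrthogonal R → ∀ X H, h (fun a => R (X a)) H = fun a => R (h X H a))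
    (htrans : ∀ (t : EuclideanSpace ℝ (Fin d)) X H,
      h (fun a => X a + t) H = h X H) :
    ∃ f : Fin n → (Fin n → EuclideanSpace ℝ (Fin d)) → (Fin n → (Fin k → ℝ)) →
        (Fin n → ℝ),
      -- each f⁽ᶜ⁾ is translation-invariant
      (∀ c (t : EuclideanSpace ℝ (Fin d)) X H,
        f c (fun a => X a + t) H = f c X H) ∧
      -- each f⁽ᶜ⁾ is rotation-invariant
      (∀ c, ∀ R : EuclideanSpace ℝ (Fin d) ≃ₗᵢ[ℝ] EuclideanSpace ℝ (Fin d),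
        IsSpecialOrthogonal R → ∀ X H, f c (fun a => R (X a)) H = f c X H) ∧
      -- the family is permutation-equivariant: f⁽σ c⁾(σ·X, σ·H)_{σ a} = f⁽ᶜ⁾(X,H)_a
      (∀ (σ : Equiv.Perm (Fin n)) (c a : Fin n) X H,
        f (σ c) (fun b => X (σ⁻¹ b)) (fun b => H (σ⁻¹ b)) (σ a) = f c X H a) ∧
      -- the decomposition holds on non-degenerate configurations
      (∀ X H,
        (∀ a : Fin n,
          Module.finrank ℝ
            (Submodule.span ℝ (Set.range fun c => X c - X a)) ≠ d - 1) →
        ∀ a : Fin n,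
          h X H a = ∑ c ∈ Finset.univ.erase a, f c X H a • (X c - X a)) :=
  univ_vec_general d n k h hperm hrot htrans
end

section
/- Let d, n be natural numbers. Let h : (Fin n → EuclideanSpace ℝ (Fin d)) → EuclideanSpace ℝ (Fin d) be SO(d)-equivariant, i.e. h(R·X) = R (h X) for every R ∈ SO(d) and every X. Then there exist n SO(d)-invariant functions f_c : (Fin n → EuclideanSpace ℝ (Fin d)) → ℝ, c ∈ Fin n (i.e. f_c(R·X) = f_c(X) for all R ∈ SO(d)), such that for every X whose family of vectors {X_c : c ∈ Fin n} does not span a subspace of dimension exactly d − 1, one has h(X) = Σ_{c ∈ Fin n} f_c(X) • X_c. -/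
open scoped RealInnerProductSpace

/-!
Equivariance under the rotations fixing `V = span {X_c}` pointwise forces `h X ∈ V`: if
`dim V ≤ d - 2` and `h X` had a nonzero component `w ⊥ V`, a product of two reflections in
hyperplanes containing `V` would fix `X` and send `w` to `-w`. The coefficients are then chosen
by Hilbert's `ε` among all solutions of `∑ c, g c • X c = h X`; a rotation does not change this
set of solutions, so the choice is invariant.
-/

open Module Submodule

section Coefficients

variable {K ι E F : Type*} [Semiring K] [Fintype ι] [AddCommMonoid E] [Module K E]
  [AddCommMonoid F] [Module K F]

noncomputable def combinationCoeffs (y : E) (X : ι → E) : ι → K :=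
  Classical.epsilon fun g => ∑ i, g i • X i = y

theorem sum_combinationCoeffs_smul {y : E} {X : ι → E} (hy : y ∈ span K (Set.range X)) :
    ∑ i, combinationCoeffs (K := K) y X i • X i = y :=
  Classical.epsilon_spec ((mem_span_range_iff_exists_fun K).mp hy)

theorem combinationCoeffs_map {f : E →ₗ[K] F} (hf : Function.Injective f) (y : E) (X : ι → E) :
    combinationCoeffs (K := K) (f y) (fun i => f (X i)) = combinationCoeffs y X := by
  unfold combinationCoeffs
  congr 1
  funext g
  simp only [← map_smul, ← map_sum, hf.eq_iff]

end Coefficients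

section Rotations

variable {E : Type*} [NormedAddCommGroup E] [InnerProductSpace ℝ E] [FiniteDimensional ℝ E]

theorem exists_det_eq_one_fix_neg (V : Submodule ℝ E) (hV : finrank ℝ V + 2 ≤ finrank ℝ E)
    {w : E} (hw : w ∈ Vᗮ) (hw0 : w ≠ 0) :
    ∃ R : E ≃ₗᵢ[ℝ] E, LinearMap.det (R.toLinearEquiv : E →ₗ[ℝ] E) = 1 ∧
      (∀ v ∈ V, R v = v) ∧ R w = -w := by
  have hVw_ne_top : V ⊔ span ℝ {w} ≠ ⊤ := by
    intro htop
    have := finrank_add_le_finrank_add_finrank V (span ℝ {w})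
    rw [htop, finrank_top, finrank_span_singleton hw0] at this
    omega
  obtain ⟨u, hu, hu0⟩ :=
    exists_mem_ne_zero_of_ne_bot (mt orthogonal_eq_bot_iff.mp hVw_ne_top)
  rw [← inf_orthogonal] at hu
  have hVu : ∀ v ∈ V, v ∈ (span ℝ {u})ᗮ := fun v hv =>
    mem_orthogonal_singleton_iff_inner_right.mpr (inner_left_of_mem_orthogonal hv hu.1)
  have hVw : ∀ v ∈ V, v ∈ (span ℝ {w})ᗮ := fun v hv =>
    mem_orthogonal_singleton_iff_inner_right.mpr (inner_left_of_mem_orthogonal hv hw)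
  have hwu : w ∈ (span ℝ {u})ᗮ := by
    rw [mem_orthogonal_singleton_iff_inner_right, real_inner_comm]
    exact mem_orthogonal_singleton_iff_inner_right.mp hu.2
  refine ⟨(reflection (span ℝ {u})ᗮ).trans (reflection (span ℝ {w})ᗮ), ?_, ?_, ?_⟩
  · change LinearMap.det ((reflection (span ℝ {w})ᗮ).toLinearMap ∘ₗ
      (reflection (span ℝ {u})ᗮ).toLinearMap) = 1
    rw [LinearMap.det_comp, det_reflection, det_reflection, orthogonal_orthogonal,
      orthogonal_orthogonal, finrank_span_singleton hw0, finrank_span_singleton hu0]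
    norm_num
  · intro v hv
    simp only [LinearIsometryEquiv.trans_apply, reflection_mem_subspace_eq_self (hVu v hv),
      reflection_mem_subspace_eq_self (hVw v hv)]
  · simp only [LinearIsometryEquiv.trans_apply, reflection_mem_subspace_eq_self hwu,
      reflection_orthogonalComplement_singleton_eq_neg]

theorem mem_of_forall_det_eq_one_fix (V : Submodule ℝ E) (hV : finrank ℝ V ≠ finrank ℝ E - 1)
    {y : E} (hy : ∀ R : E ≃ₗᵢ[ℝ] E, LinearMap.det (R.toLinearEquiv : E →ₗ[ℝ] E) = 1 →
      (∀ v ∈ V, R v = v) → R y = y) :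
    y ∈ V := by
  rcases eq_or_ne V ⊤ with rfl | hVtop
  · exact mem_top
  have hcodim : finrank ℝ V + 2 ≤ finrank ℝ E := by
    have := finrank_lt hVtop
    omega
  set w := y - V.starProjection y
  have hw : w ∈ Vᗮ := sub_starProjection_mem_orthogonal y
  suffices w = 0 by rwa [sub_eq_zero, eq_comm, starProjection_eq_self_iff] at this
  by_contra hw0
  obtain ⟨R, hdet, hfix, hRw⟩ := exists_det_eq_one_fix_neg V hcodim hw hw0
  have hsplit : y = V.starProjection y + w := (add_sub_cancel _ _).symm
  have hRy := hy R hdet hfix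
  rw [hsplit, map_add, hfix _ (starProjection_apply_mem V y), hRw, add_right_inj,
    neg_eq_iff_add_eq_zero, ← two_smul ℝ, smul_eq_zero] at hRy
  exact hw0 (hRy.resolve_left two_ne_zero)

end Rotations

theorem so_equivariant_is_linear_combination (d n : ℕ)
    (h : (Fin n → EuclideanSpace ℝ (Fin d)) → EuclideanSpace ℝ (Fin d))
    (hrot : ∀ R : EuclideanSpace ℝ (Fin d) ≃ₗᵢ[ℝ] EuclideanSpace ℝ (Fin d),
      IsSpecialOrthogonal R → ∀ X, h (fun a => R (X a)) = R (h X)) :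
    ∃ f : Fin n → (Fin n → EuclideanSpace ℝ (Fin d)) → ℝ,
      (∀ c, ∀ R : EuclideanSpace ℝ (Fin d) ≃ₗᵢ[ℝ] EuclideanSpace ℝ (Fin d),
        IsSpecialOrthogonal R → ∀ X, f c (fun a => R (X a)) = f c X) ∧
      (∀ X : Fin n → EuclideanSpace ℝ (Fin d),
        Module.finrank ℝ (Submodule.span ℝ (Set.range X)) ≠ d - 1 →
        h X = ∑ c, f c X • X c) := by
  refine ⟨fun c X => combinationCoeffs (h X) X c, ?_, ?_⟩
  · intro c R hR X
    dsimp only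
    rw [hrot R hR X]
    exact congrFun (combinationCoeffs_map (f := R.toLinearEquiv.toLinearMap) R.injective _ _) c
  · intro X hX
    refine (sum_combinationCoeffs_smul (mem_of_forall_det_eq_one_fix _ ?_ fun R hR hfix => ?_)).symm
    · rwa [finrank_euclideanSpace_fin]
    · have hRX : (fun a => R (X a)) = X := funext fun a => hfix _ (subset_span ⟨a, rfl⟩)
      rw [← hrot R hR X, hRX]
end
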